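/- arXiv:1907.10243 — 7 statements merged into one kernel-verified Lean document; each statement's English description precedes it below -/
import Mathlib

section
/- Let P and P' be two irreducible row-stochastic matrices on a finite state space S with stationary distributions π and π', and reward functions f and f'. Let g solve the Poisson equation (I - P) g + η·1 = f, where η = π f is the average reward under (P, f). Then the performance difference formula holds: η' - η = π' ((P' - P) g + (f' - f)), where η' = π' f'. -/
/-- Performance difference formula (Cao–Chen): for irreducible stochastic
matrices P, P' with stationary distributions π, π', rewards f, f', average
rewards η = π f, η' = π' f', and g solving the Poisson equation
(I - P) g + η·1 = f, we have η' - η = π' ((P' - P) g + (f' - f)). -/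
theorem performance_difference_formula
    {S : Type*} [Fintype S] [DecidableEq S] [Nonempty S]
    (P P' : Matrix S S ℝ)
    (hPnn : ∀ i j, 0 ≤ P i j) (hProw : ∀ i, ∑ j, P i j = 1)
    (hP'nn : ∀ i j, 0 ≤ P' i j) (hP'row : ∀ i, ∑ j, P' i j = 1)
    (hPirr : ∀ i j, ∃ n : ℕ, 0 < (P ^ n) i j)
    (hP'irr : ∀ i j, ∃ n : ℕ, 0 < (P' ^ n) i j)
    (π π' : S → ℝ)
    (hπnn : ∀ i, 0 ≤ π i) (hπsum : ∑ i, π i = 1)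
    (hπstat : ∀ j, ∑ i, π i * P i j = π j)
    (hπ'nn : ∀ i, 0 ≤ π' i) (hπ'sum : ∑ i, π' i = 1)
    (hπ'stat : ∀ j, ∑ i, π' i * P' i j = π' j)
    (f f' g : S → ℝ)
    (η η' : ℝ) (hη : η = ∑ s, π s * f s) (hη' : η' = ∑ s, π' s * f' s)
    (hpoisson : ∀ s, (g s - ∑ s', P s s' * g s') + η = f s) :
    η' - η = ∑ s, π' s * ((∑ s', (P' s s' - P s s') * g s') + (f' s - f s)) := by
  have hP'g : ∑ s, π' s * ∑ s', P' s s' * g s' = ∑ s', π' s' * g s' := by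
    simp_rw [Finset.mul_sum]
    rw [Finset.sum_comm]
    simp_rw [← mul_assoc, ← Finset.sum_mul, hπ'stat]
  have hf : ∑ s, π' s * f s
      = (∑ s, π' s * g s) - (∑ s, π' s * ∑ s', P s s' * g s') + η := by
    simp_rw [← hpoisson, mul_add, mul_sub, Finset.sum_add_distrib,
      Finset.sum_sub_distrib, ← Finset.sum_mul, hπ'sum, one_mul]
  have expand : ∑ s, π' s * ((∑ s', (P' s s' - P s s') * g s') + (f' s - f s))
      = (∑ s, π' s * ∑ s', P' s s' * g s') - (∑ s, π' s * ∑ s', P s s' * g s')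
        + ((∑ s, π' s * f' s) - (∑ s, π' s * f s)) := by
    simp_rw [sub_mul, Finset.sum_sub_distrib, mul_add, mul_sub,
      Finset.sum_add_distrib, Finset.sum_sub_distrib]
  rw [expand, hP'g, hf, ← hη']
  ring
end

section
/- Under the hypotheses of the performance difference formula, if (P' - P) g + (f' - f) ≥ 0 componentwise and is strictly positive in at least one state, then η' > η; in particular, the policy improvement step of policy iteration for average-reward finite MDPs strictly increases the average reward unless the current policy is already optimal on the set of available actions at every state. -/
/-- Policy improvement: under the hypotheses of the performance difference
formula, if (P' - P) g + (f' - f) ≥ 0 componentwise and strictly positive in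
at least one state, then η' > η. -/
theorem policy_improvement_strict
    {S : Type*} [Fintype S] [DecidableEq S] [Nonempty S]
    (P P' : Matrix S S ℝ)
    (hPnn : ∀ i j, 0 ≤ P i j) (hProw : ∀ i, ∑ j, P i j = 1)
    (hP'nn : ∀ i j, 0 ≤ P' i j) (hP'row : ∀ i, ∑ j, P' i j = 1)
    (hPirr : ∀ i j, ∃ n : ℕ, 0 < (P ^ n) i j)
    (hP'irr : ∀ i j, ∃ n : ℕ, 0 < (P' ^ n) i j)
    (π π' : S → ℝ)
    (hπnn : ∀ i, 0 ≤ π i) (hπsum : ∑ i, π i = 1)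
    (hπstat : ∀ j, ∑ i, π i * P i j = π j)
    (hπ'nn : ∀ i, 0 ≤ π' i) (hπ'sum : ∑ i, π' i = 1)
    (hπ'stat : ∀ j, ∑ i, π' i * P' i j = π' j)
    (f f' g : S → ℝ)
    (η η' : ℝ) (hη : η = ∑ s, π s * f s) (hη' : η' = ∑ s, π' s * f' s)
    (hpoisson : ∀ s, (g s - ∑ s', P s s' * g s') + η = f s)
    (himp : ∀ s, 0 ≤ (∑ s', (P' s s' - P s s') * g s') + (f' s - f s))
    (hstrict : ∃ s, 0 < (∑ s', (P' s s' - P s s') * g s') + (f' s - f s)) :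
    η < η' := by
  -- powers of P' are entrywise nonnegative
  have hpownn : ∀ n : ℕ, ∀ i j, 0 ≤ (P' ^ n) i j := by
    intro n
    induction n with
    | zero => intro i j; simp [Matrix.one_apply]; positivity
    | succ n ih =>
      intro i j
      have : (P' ^ (n + 1)) i j = ∑ k, (P' ^ n) i k * P' k j := by
        rw [pow_succ]; rfl
      rw [this]
      exact Finset.sum_nonneg fun k _ => mul_nonneg (ih i k) (hP'nn k j)
  -- stationarity under powers of P'
  have hpow : ∀ n : ℕ, ∀ j, ∑ i, π' i * (P' ^ n) i j = π' j := by
    intro n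
    induction n with
    | zero => intro j; simp [Matrix.one_apply]
    | succ n ih =>
      intro j
      have h1 : ∀ i, (P' ^ (n + 1)) i j = ∑ k, (P' ^ n) i k * P' k j := by
        intro i; rw [pow_succ]; rfl
      calc ∑ i, π' i * (P' ^ (n + 1)) i j
          = ∑ i, ∑ k, π' i * (P' ^ n) i k * P' k j := by
            simp_rw [h1, Finset.mul_sum, mul_assoc]
        _ = ∑ k, (∑ i, π' i * (P' ^ n) i k) * P' k j := by
            rw [Finset.sum_comm]; simp_rw [Finset.sum_mul]
        _ = ∑ k, π' k * P' k j := by simp_rw [ih]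
        _ = π' j := hπ'stat j
  -- π' is strictly positive
  have hπ'pos : ∀ s, 0 < π' s := by
    have hs0 : ∃ s0, 0 < π' s0 := by
      by_contra h
      push_neg at h
      have hz : ∀ s, π' s = 0 := fun s => le_antisymm (h s) (hπ'nn s)
      simp [hz] at hπ'sum
    obtain ⟨s0, hs0⟩ := hs0
    intro s
    obtain ⟨n, hn⟩ := hP'irr s0 s
    have hge : π' s0 * (P' ^ n) s0 s ≤ ∑ i, π' i * (P' ^ n) i s :=
      Finset.single_le_sum
        (fun i _ => mul_nonneg (hπ'nn i) (hpownn n i s)) (Finset.mem_univ s0)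
    calc (0 : ℝ) < π' s0 * (P' ^ n) s0 s := mul_pos hs0 hn
      _ ≤ ∑ i, π' i * (P' ^ n) i s := hge
      _ = π' s := hpow n s
  -- performance difference formula
  set D : S → ℝ := fun s => (∑ s', (P' s s' - P s s') * g s') + (f' s - f s) with hD
  have hDform : ∀ s, D s = (∑ s', P' s s' * g s') + f' s - g s - η := by
    intro s
    have hf : f s = (g s - ∑ s', P s s' * g s') + η := (hpoisson s).symm
    simp only [hD, sub_mul, Finset.sum_sub_distrib, hf]
    ring
  have hkey : ∑ s, π' s * D s = η' - η := by
    have h1 : ∑ s, π' s * ∑ s', P' s s' * g s' = ∑ s', π' s' * g s' := by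
      calc ∑ s, π' s * ∑ s', P' s s' * g s'
          = ∑ s, ∑ s', π' s * P' s s' * g s' := by
            simp_rw [Finset.mul_sum, mul_assoc]
        _ = ∑ s', (∑ s, π' s * P' s s') * g s' := by
            rw [Finset.sum_comm]; simp_rw [Finset.sum_mul]
        _ = ∑ s', π' s' * g s' := by simp_rw [hπ'stat]
    calc ∑ s, π' s * D s
        = ∑ s, (π' s * ∑ s', P' s s' * g s' + π' s * f' s - π' s * g s
            - π' s * η) := by
          apply Finset.sum_congr rfl; intro s _; rw [hDform s]; ring
      _ = (∑ s, π' s * ∑ s', P' s s' * g s') + (∑ s, π' s * f' s)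
            - (∑ s, π' s * g s) - (∑ s, π' s) * η := by
          simp [Finset.sum_sub_distrib, Finset.sum_add_distrib, Finset.sum_mul]
      _ = η' - η := by rw [h1, hπ'sum, hη']; ring
  obtain ⟨s₀, hs₀⟩ := hstrict
  have hpos : 0 < ∑ s, π' s * D s := by
    apply Finset.sum_pos' (fun s _ => mul_nonneg (hπ'nn s) (himp s))
    exact ⟨s₀, Finset.mem_univ s₀, mul_pos (hπ'pos s₀) hs₀⟩
  linarith [hkey]
end

section
/- In an M/M/1 queue with controllable service rate chosen from a finite set M ⊂ (λ, ∞), holding cost h per customer per unit time and service cost c(μ) per unit time that is nondecreasing and convex in μ, the long-run-average-optimal stationary policy is monotone: the optimal service rate μ*(n) is nondecreasing in the queue length n, provided the relative value function g of the optimal policy is convex in n. -/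
/-- M/M/1 with controllable service rate from a finite set M ⊂ (λ,∞), holding
cost h per customer, nondecreasing convex service cost c(μ): if the relative
value function g of the average-cost optimality equation is convex in n, then
the (smallest) optimal service rate μ*(n) is nondecreasing in n. -/
theorem mm1_service_rate_control_monotone
    (lam h η Λ : ℝ) (hlam : 0 < lam)
    (M : Finset ℝ) (hM : M.Nonempty) (hMgt : ∀ μ ∈ M, lam < μ)
    (c : ℝ → ℝ) (hcmono : Monotone c) (hcconv : ConvexOn ℝ Set.univ c)
    (hΛ : ∀ μ ∈ M, lam + μ ≤ Λ) (hΛpos : 0 < Λ)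
    (g : ℕ → ℝ)
    (hgconv : ∀ n, g (n + 1) - g n ≤ g (n + 2) - g (n + 1))
    (F : ℕ → ℝ → ℝ)
    (hF : ∀ n μ, F n μ =
      (c μ + lam * g (n + 1) + μ * g (n - 1) + (Λ - lam - μ) * g n) / Λ)
    -- average-cost optimality equation
    (hACOE : ∀ n, η + g n = h * n + M.inf' hM (F n))
    (μstar : ℕ → ℝ)
    (hμmem : ∀ n, μstar n ∈ M)
    (hμopt : ∀ n, F n (μstar n) = M.inf' hM (F n))
    (hμmin : ∀ n, ∀ μ ∈ M, F n μ = M.inf' hM (F n) → μstar n ≤ μ) :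
    ∀ n n' : ℕ, n ≤ n' → μstar n ≤ μstar n' := by
  have hd : Monotone (fun k => g (k + 1) - g k) :=
    monotone_nat_of_le_succ (fun k => hgconv k)
  intro n n' hnn'
  by_contra hcon
  push_neg at hcon
  set a := μstar n with ha
  set b := μstar n' with hb
  have haM : a ∈ M := hμmem n
  have hbM : b ∈ M := hμmem n'
  -- b is at least as good as a at state n'
  have h1 : F n' b ≤ F n' a := by
    rw [hμopt n']
    exact Finset.inf'_le _ haM
  -- then b is at least as good as a at state n
  have key : F n b ≤ F n a := by
    cases n with
    | zero =>
      rw [hF, hF]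
      apply (div_le_div_iff_of_pos_right hΛpos).mpr
      have : c b ≤ c a := hcmono hcon.le
      norm_num
      nlinarith
    | succ m =>
      obtain ⟨m', rfl⟩ : ∃ m', n' = m' + 1 := ⟨n' - 1, by omega⟩
      have hmm' : m ≤ m' := by omega
      rw [hF, hF] at h1
      have h1' := (div_le_div_iff_of_pos_right hΛpos).mp h1
      rw [hF, hF]
      apply (div_le_div_iff_of_pos_right hΛpos).mpr
      simp only [Nat.add_sub_cancel] at h1' ⊢
      have hincr : g (m + 1) - g m ≤ g (m' + 1) - g m' := hd hmm'
      nlinarith [mul_le_mul_of_nonneg_left hincr (by linarith : (0:ℝ) ≤ a - b)]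
  -- hence b is a minimizer at n, contradicting minimality of a
  have hle : M.inf' hM (F n) ≤ F n b := Finset.inf'_le _ hbM
  have heq : F n b = M.inf' hM (F n) := le_antisymm (key.trans_eq (hμopt n)) hle
  exact absurd (hμmin n b hbM heq) (not_le.mpr hcon)
end

section
/- For a Jackson network of J independent M/M/1 stations in which station j has effective arrival rate λ_j solving the traffic equations and service rate μ_j with λ_j < μ_j for all j, the stationary distribution has product form: π(n_1, ..., n_J) = ∏_{j=1}^J (1 - ρ_j) ρ_j^{n_j}, where ρ_j = λ_j/μ_j. -/
/-- Jackson network product-form theorem: with traffic equations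
λ_j = α_j + ∑_i λ_i R(i,j) and ρ_j = λ_j/μ_j < 1, the product-form measure
π(n) = ∏_j (1-ρ_j) ρ_j^{n_j} satisfies the global balance equations of the
network's generator (external arrivals, departures, and internal routing). -/
theorem jackson_product_form
    (J : ℕ) (α lam mu : Fin J → ℝ) (R : Matrix (Fin J) (Fin J) ℝ)
    (hα : ∀ j, 0 ≤ α j) (hμ : ∀ j, 0 < mu j)
    (hRnn : ∀ i j, 0 ≤ R i j) (hRsub : ∀ i, ∑ j, R i j ≤ 1)
    (htraffic : ∀ j, lam j = α j + ∑ i, lam i * R i j)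
    (hlampos : ∀ j, 0 < lam j) (hstab : ∀ j, lam j < mu j)
    (π : (Fin J → ℕ) → ℝ)
    (hπ : ∀ n, π n = ∏ j, (1 - lam j / mu j) * (lam j / mu j) ^ (n j)) :
    -- global balance at every state n
    ∀ n : Fin J → ℕ,
      π n * ((∑ j, α j) + ∑ j, if 0 < n j then mu j else 0) =
        -- inflow from external arrivals
        (∑ j, if 0 < n j then π (Function.update n j (n j - 1)) * α j else 0) +
        -- inflow from departures out of the network
        (∑ j, π (Function.update n j (n j + 1)) * mu j * (1 - ∑ k, R j k)) +
        -- inflow from internal routing j → k (from state n + e_j - e_k)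
        (∑ j, ∑ k, if 0 < n k then
            π (Function.update (Function.update n j (n j + 1)) k
                ((Function.update n j (n j + 1)) k - 1)) * mu j * R j k
          else 0) := by
  intro n
  set ρ : Fin J → ℝ := fun j => lam j / mu j with hρdef
  have hμ' : ∀ j, mu j ≠ 0 := fun j => (hμ j).ne'
  have hlam' : ∀ j, lam j ≠ 0 := fun j => (hlampos j).ne'
  have hρmu : ∀ j, ρ j * mu j = lam j := fun j => div_mul_cancel₀ _ (hμ' j)
  have hρne : ∀ j, ρ j ≠ 0 := fun j => div_ne_zero (hlam' j) (hμ' j)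
  have hρinv : ∀ j, (ρ j)⁻¹ = mu j / lam j := fun j => by
    simp [hρdef, inv_div]
  -- decompositions of π
  have hupd : ∀ (n : Fin J → ℕ) (j : Fin J) (m : ℕ),
      π (Function.update n j m)
        = ((1 - ρ j) * ρ j ^ m) *
            ∏ k ∈ Finset.univ.erase j, (1 - ρ k) * ρ k ^ (n k) := by
    intro n j m
    rw [hπ, ← Finset.mul_prod_erase _ _ (Finset.mem_univ j), Function.update_self]
    congr 1
    exact Finset.prod_congr rfl fun k hk => by
      rw [Function.update_of_ne (Finset.ne_of_mem_erase hk)]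
  have hdec : ∀ (n : Fin J → ℕ) (j : Fin J),
      π n = ((1 - ρ j) * ρ j ^ (n j)) *
            ∏ k ∈ Finset.univ.erase j, (1 - ρ k) * ρ k ^ (n k) := by
    intro n j
    rw [hπ, ← Finset.mul_prod_erase _ _ (Finset.mem_univ j)]
  have hA : ∀ (n : Fin J → ℕ) (j : Fin J),
      π (Function.update n j (n j + 1)) = π n * ρ j := by
    intro n j
    rw [hupd, hdec n j, pow_succ]; ring
  have hB : ∀ (n : Fin J → ℕ) (j : Fin J), 0 < n j →
      π (Function.update n j (n j - 1)) = π n * (ρ j)⁻¹ := by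
    intro n j hj
    have key := hA (Function.update n j (n j - 1)) j
    simp only [Function.update_self, Function.update_idem] at key
    rw [Nat.sub_add_cancel hj, Function.update_eq_self] at key
    rw [key, mul_assoc, mul_inv_cancel₀ (hρne j), mul_one]
  have hC : ∀ j k, 0 < n k →
      π (Function.update (Function.update n j (n j + 1)) k
          ((Function.update n j (n j + 1)) k - 1)) = π n * ρ j * (ρ k)⁻¹ := by
    intro j k hk
    have hk' : 0 < (Function.update n j (n j + 1)) k := by
      rcases eq_or_ne k j with h | h
      · subst h; simp
      · rw [Function.update_of_ne h]; exact hk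
    rw [hB _ k hk', hA]
  -- rewrite the three inflow sums
  have e1 : (∑ j, if 0 < n j then π (Function.update n j (n j - 1)) * α j else 0)
      = ∑ j, if 0 < n j then π n * ((ρ j)⁻¹ * α j) else 0 := by
    refine Finset.sum_congr rfl fun j _ => ?_
    split
    · next h => rw [hB n j h]; ring
    · rfl
  have e2 : (∑ j, π (Function.update n j (n j + 1)) * mu j * (1 - ∑ k, R j k))
      = ∑ j, π n * (lam j * (1 - ∑ k, R j k)) := by
    refine Finset.sum_congr rfl fun j _ => ?_
    rw [hA n j, show π n * ρ j * mu j * (1 - ∑ k, R j k)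
        = π n * ((ρ j * mu j) * (1 - ∑ k, R j k)) from by ring, hρmu]
  have e3 : (∑ j, ∑ k, if 0 < n k then
        π (Function.update (Function.update n j (n j + 1)) k
            ((Function.update n j (n j + 1)) k - 1)) * mu j * R j k else 0)
      = ∑ j, ∑ k, if 0 < n k then π n * (lam j * R j k * (ρ k)⁻¹) else 0 := by
    refine Finset.sum_congr rfl fun j _ => Finset.sum_congr rfl fun k _ => ?_
    split
    · next h =>
      rw [hC j k h, show π n * ρ j * (ρ k)⁻¹ * mu j * R j k
          = π n * ((ρ j * mu j) * R j k * (ρ k)⁻¹) from by ring, hρmu]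
    · rfl
  -- scalar (normalized) balance identity
  have t2 : (∑ j, lam j * (1 - ∑ k, R j k)) = ∑ j, α j := by
    have h1 : (∑ j, lam j * (1 - ∑ k, R j k))
        = (∑ j, lam j) - ∑ j, ∑ k, lam j * R j k := by
      rw [← Finset.sum_sub_distrib]
      exact Finset.sum_congr rfl fun j _ => by rw [← Finset.mul_sum]; ring
    have h2 : (∑ j, ∑ k, lam j * R j k) = ∑ k, (lam k - α k) := by
      rw [Finset.sum_comm]
      exact Finset.sum_congr rfl fun k _ => by have := htraffic k; linarith
    rw [h1, h2, Finset.sum_sub_distrib]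
    ring
  have t3 : (∑ j, ∑ k, if 0 < n k then lam j * R j k * (ρ k)⁻¹ else 0)
      = ∑ k, if 0 < n k then mu k - (ρ k)⁻¹ * α k else 0 := by
    rw [Finset.sum_comm]
    refine Finset.sum_congr rfl fun k _ => ?_
    by_cases h : 0 < n k
    · simp only [if_pos h]
      rw [show (∑ j, lam j * R j k * (ρ k)⁻¹)
          = (∑ j, lam j * R j k) * (ρ k)⁻¹ from (Finset.sum_mul _ _ _).symm]
      have hsum : (∑ j, lam j * R j k) = lam k - α k := by
        have := htraffic k; linarith
      rw [hsum, hρinv k]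
      field_simp [hlam' k]
    · simp [h]
  have tcomb : (∑ j, if 0 < n j then (ρ j)⁻¹ * α j else 0)
      + (∑ j, if 0 < n j then mu j - (ρ j)⁻¹ * α j else 0)
      = ∑ j, if 0 < n j then mu j else 0 := by
    rw [← Finset.sum_add_distrib]
    exact Finset.sum_congr rfl fun j _ => by split <;> ring
  have key : (∑ j, α j) + (∑ j, if 0 < n j then mu j else 0)
      = (∑ j, if 0 < n j then (ρ j)⁻¹ * α j else 0)
        + (∑ j, lam j * (1 - ∑ k, R j k))
        + (∑ j, ∑ k, if 0 < n k then lam j * R j k * (ρ k)⁻¹ else 0) := by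
    rw [t2, t3]
    linarith [tcomb]
  -- pull π n out of each sum
  have d1 : (∑ j, if 0 < n j then π n * ((ρ j)⁻¹ * α j) else 0)
      = π n * ∑ j, if 0 < n j then (ρ j)⁻¹ * α j else 0 := by
    rw [Finset.mul_sum]
    exact Finset.sum_congr rfl fun j _ => by split <;> simp
  have d2 : (∑ j, π n * (lam j * (1 - ∑ k, R j k)))
      = π n * ∑ j, lam j * (1 - ∑ k, R j k) := (Finset.mul_sum _ _ _).symm
  have d3 : (∑ j, ∑ k, if 0 < n k then π n * (lam j * R j k * (ρ k)⁻¹) else 0)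
      = π n * ∑ j, ∑ k, if 0 < n k then lam j * R j k * (ρ k)⁻¹ else 0 := by
    rw [Finset.mul_sum]
    refine Finset.sum_congr rfl fun j _ => ?_
    rw [Finset.mul_sum]
    exact Finset.sum_congr rfl fun k _ => by split <;> simp
  rw [e1, e2, e3, d1, d2, d3, ← mul_add, ← mul_add, key]
end

section
/- The c-μ rule is optimal for a single server with two customer classes and no arrivals: given n_1 class-1 and n_2 class-2 customers with exponential service rates μ_1, μ_2 and holding costs c_1, c_2 per customer per unit time, if c_1 μ_1 ≥ c_2 μ_2 then serving class 1 whenever n_1 > 0 minimizes the total expected holding cost until the system empties. -/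
/-- Twice the number of weakly increasing pairs with both coordinates
satisfying `p` is `m² + m`, where `m` is the number of elements satisfying `p`. -/
lemma cmu_aux_pairs {α : Type*} [Fintype α] [LinearOrder α]
    (p : α → Prop) [DecidablePred p] :
    2 * ((Finset.univ ×ˢ Finset.univ).filter
        (fun x : α × α => (p x.1 ∧ p x.2) ∧ x.1 ≤ x.2)).card
      = (Finset.univ.filter p).card * (Finset.univ.filter p).card
        + (Finset.univ.filter p).card := by
  classical
  set S₁ := (Finset.univ ×ˢ Finset.univ).filter
      (fun x : α × α => (p x.1 ∧ p x.2) ∧ x.1 ≤ x.2) with hS₁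
  set S₂ := (Finset.univ ×ˢ Finset.univ).filter
      (fun x : α × α => (p x.1 ∧ p x.2) ∧ x.2 ≤ x.1) with hS₂
  have hcard : S₂.card = S₁.card := by
    apply Finset.card_bij (fun x _ => x.swap)
    · intro a ha
      simp only [hS₁, hS₂, Finset.mem_filter, Finset.mem_product] at ha ⊢
      tauto
    · intro a _ b _ h
      exact Prod.ext (congrArg Prod.snd h) (congrArg Prod.fst h)
    · intro b hb
      refine ⟨b.swap, ?_, rfl⟩
      simp only [hS₁, hS₂, Finset.mem_filter, Finset.mem_product] at hb ⊢
      tauto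
  have hunion : S₁ ∪ S₂ = (Finset.univ ×ˢ Finset.univ).filter
      (fun x : α × α => p x.1 ∧ p x.2) := by
    ext x
    simp only [hS₁, hS₂, Finset.mem_union, Finset.mem_filter, Finset.mem_product]
    rcases le_total x.1 x.2 with h | h <;> tauto
  have hinter : S₁ ∩ S₂ = (Finset.univ ×ˢ Finset.univ).filter
      (fun x : α × α => p x.1 ∧ x.1 = x.2) := by
    ext x
    simp only [hS₁, hS₂, Finset.mem_inter, Finset.mem_filter, Finset.mem_product]
    constructor
    · rintro ⟨⟨h1, ⟨hp1, hp2⟩, h12⟩, _, _, h21⟩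
      exact ⟨h1, hp1, le_antisymm h12 h21⟩
    · rintro ⟨h1, hp1, heq⟩
      refine ⟨⟨h1, ⟨hp1, heq ▸ hp1⟩, le_of_eq heq⟩, h1, ⟨hp1, heq ▸ hp1⟩,
        le_of_eq heq.symm⟩
  have hU : ((Finset.univ ×ˢ Finset.univ).filter
      (fun x : α × α => p x.1 ∧ p x.2)).card
      = (Finset.univ.filter p).card * (Finset.univ.filter p).card := by
    rw [← Finset.card_product, ← Finset.filter_product]
  have hD : ((Finset.univ ×ˢ Finset.univ).filter
      (fun x : α × α => p x.1 ∧ x.1 = x.2)).card = (Finset.univ.filter p).card := by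
    apply Finset.card_bij (fun x _ => x.1)
    · intro a ha
      simp only [Finset.mem_filter, Finset.mem_product] at ha ⊢
      exact ⟨Finset.mem_univ _, ha.2.1⟩
    · intro a ha b hb h
      simp only [Finset.mem_filter, Finset.mem_product] at ha hb
      exact Prod.ext h (by rw [← ha.2.2, ← hb.2.2, h])
    · intro b hb
      simp only [Finset.mem_filter] at hb
      exact ⟨(b, b), by simp [hb.2], rfl⟩
  have := Finset.card_union_add_card_inter S₁ S₂
  rw [hunion, hinter, hU, hD, hcard] at this
  omega

/-- The number of weakly increasing mixed pairs (first coordinate in `p`,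
second in `q`, plus the symmetric count) is `|p| * |q|` when `p, q` are
disjoint predicates. -/
lemma cmu_aux_mixed {α : Type*} [Fintype α] [LinearOrder α]
    (p q : α → Prop) [DecidablePred p] [DecidablePred q]
    (hpq : ∀ i, ¬ (p i ∧ q i)) :
    ((Finset.univ ×ˢ Finset.univ).filter
        (fun x : α × α => (p x.1 ∧ q x.2) ∧ x.1 ≤ x.2)).card
      + ((Finset.univ ×ˢ Finset.univ).filter
        (fun x : α × α => (q x.1 ∧ p x.2) ∧ x.1 ≤ x.2)).card
      = (Finset.univ.filter p).card * (Finset.univ.filter q).card := by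
  classical
  set S₁ := (Finset.univ ×ˢ Finset.univ).filter
      (fun x : α × α => (p x.1 ∧ q x.2) ∧ x.1 ≤ x.2) with hS₁
  set S₂ := (Finset.univ ×ˢ Finset.univ).filter
      (fun x : α × α => (p x.1 ∧ q x.2) ∧ x.2 ≤ x.1) with hS₂
  have hcard : ((Finset.univ ×ˢ Finset.univ).filter
      (fun x : α × α => (q x.1 ∧ p x.2) ∧ x.1 ≤ x.2)).card = S₂.card := by
    apply Finset.card_bij (fun x _ => x.swap)
    · intro a ha
      simp only [hS₂, Finset.mem_filter, Finset.mem_product] at ha ⊢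
      tauto
    · intro a _ b _ h
      exact Prod.ext (congrArg Prod.snd h) (congrArg Prod.fst h)
    · intro b hb
      refine ⟨b.swap, ?_, rfl⟩
      simp only [hS₂, Finset.mem_filter, Finset.mem_product] at hb ⊢
      tauto
  have hdisj : Disjoint S₁ S₂ := by
    rw [Finset.disjoint_left]
    intro x hx1 hx2
    simp only [hS₁, hS₂, Finset.mem_filter, Finset.mem_product] at hx1 hx2
    have heq : x.1 = x.2 := le_antisymm hx1.2.2 hx2.2.2
    exact hpq x.1 ⟨hx1.2.1.1, heq ▸ hx1.2.1.2⟩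
  have hunion : S₁ ∪ S₂ = (Finset.univ ×ˢ Finset.univ).filter
      (fun x : α × α => p x.1 ∧ q x.2) := by
    ext x
    simp only [hS₁, hS₂, Finset.mem_union, Finset.mem_filter, Finset.mem_product]
    rcases le_total x.1 x.2 with h | h <;> tauto
  have hU : ((Finset.univ ×ˢ Finset.univ).filter
      (fun x : α × α => p x.1 ∧ q x.2)).card
      = (Finset.univ.filter p).card * (Finset.univ.filter q).card := by
    rw [← Finset.card_product, ← Finset.filter_product]
  rw [hcard, ← Finset.card_union_of_disjoint hdisj, hunion, hU]

/-- The cμ rule with two classes and no arrivals: with n₁ class-1 and n₂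
class-2 customers (class 1 encoded `true`), exponential rates μᵢ and holding
costs cᵢ, the expected total holding cost of serving the customers in the
order σ is ∑_i (∑_{j ≥ i} c_{σ j}) / μ_{σ i}.  If c₁μ₁ ≥ c₂μ₂ then the
priority order serving all of class 1 first minimizes this cost over all
service orders. -/
theorem c_mu_rule_two_classes
    (n₁ n₂ : ℕ) (μ₁ μ₂ c₁ c₂ : ℝ)
    (hμ₁ : 0 < μ₁) (hμ₂ : 0 < μ₂) (hc₁ : 0 ≤ c₁) (hc₂ : 0 ≤ c₂)
    (hrule : c₂ * μ₂ ≤ c₁ * μ₁)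
    (cost : (Fin (n₁ + n₂) → Bool) → ℝ)
    (hcost : ∀ σ : Fin (n₁ + n₂) → Bool,
      cost σ = ∑ i : Fin (n₁ + n₂),
        (∑ j ∈ Finset.univ.filter (fun j : Fin (n₁ + n₂) => i ≤ j),
          (if σ j then c₁ else c₂)) / (if σ i then μ₁ else μ₂))
    (σ₀ : Fin (n₁ + n₂) → Bool)
    (hσ₀ : ∀ i : Fin (n₁ + n₂), σ₀ i = decide ((i : ℕ) < n₁)) :
    ∀ σ : Fin (n₁ + n₂) → Bool,
      (Finset.univ.filter (fun i => σ i = true)).card = n₁ →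
      cost σ₀ ≤ cost σ := by
  classical
  intro σ hσ
  -- notation for the pair count
  set cnt : (Fin (n₁ + n₂) → Bool) → Bool → Bool → ℕ := fun τ a b =>
    ((Finset.univ ×ˢ Finset.univ).filter
      (fun x : Fin (n₁+n₂) × Fin (n₁+n₂) =>
        (τ x.1 = a ∧ τ x.2 = b) ∧ x.1 ≤ x.2)).card with hcnt
  -- rewriting the cost as a sum over value patterns of pairs
  have key : ∀ τ : Fin (n₁ + n₂) → Bool,
      cost τ = ∑ b : Bool × Bool, ((cnt τ b.1 b.2 : ℝ))
        * ((if b.2 then c₁ else c₂) / (if b.1 then μ₁ else μ₂)) := by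
    intro τ
    rw [hcost]
    have h1 : ∀ i : Fin (n₁+n₂),
        (∑ j ∈ Finset.univ.filter (fun j : Fin (n₁ + n₂) => i ≤ j),
            (if τ j then c₁ else c₂)) / (if τ i then μ₁ else μ₂)
        = ∑ j ∈ Finset.univ.filter (fun j : Fin (n₁ + n₂) => i ≤ j),
            (if τ j then c₁ else c₂) / (if τ i then μ₁ else μ₂) := fun i =>
      Finset.sum_div _ _ _
    simp_rw [h1]
    rw [← Finset.sum_finset_product' ((Finset.univ ×ˢ Finset.univ).filter
        (fun x : Fin (n₁+n₂) × Fin (n₁+n₂) => x.1 ≤ x.2)) Finset.univ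
        (fun i => Finset.univ.filter (fun j : Fin (n₁ + n₂) => i ≤ j))
        (by intro p; simp)]
    rw [← Finset.sum_fiberwise' ((Finset.univ ×ˢ Finset.univ).filter
        (fun x : Fin (n₁+n₂) × Fin (n₁+n₂) => x.1 ≤ x.2))
        (fun x => (τ x.1, τ x.2))
        (fun b : Bool × Bool => (if b.2 then c₁ else c₂) / (if b.1 then μ₁ else μ₂))]
    refine Finset.sum_congr rfl fun b _ => ?_
    rw [Finset.sum_const, nsmul_eq_mul]
    congr 1
    rw [Finset.filter_filter]
    norm_cast
    apply congrArg Finset.card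
    apply Finset.filter_congr
    intro x _
    simp [hcnt, Prod.ext_iff, and_comm]
  -- cardinalities of true/false sets
  have hσ₀card : (Finset.univ.filter (fun i => σ₀ i = true)).card = n₁ := by
    have : (Finset.univ.filter (fun i => σ₀ i = true))
        = (Finset.univ.filter (fun i : Fin (n₁+n₂) => (i : ℕ) < n₁)) := by
      apply Finset.filter_congr; intro i _; simp [hσ₀]
    rw [this]
    have e2 : (Finset.univ.filter (fun i : Fin (n₁+n₂) => (i : ℕ) < n₁)).card
        = (Finset.univ : Finset (Fin n₁)).card := by
      apply Finset.card_bij'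
        (fun (i : Fin (n₁+n₂))
            (hi : i ∈ Finset.univ.filter (fun i : Fin (n₁+n₂) => (i : ℕ) < n₁)) =>
          (⟨(i : ℕ), (Finset.mem_filter.mp hi).2⟩ : Fin n₁))
        (fun j _ => (⟨(j : ℕ), lt_of_lt_of_le j.2 (Nat.le_add_right _ _)⟩ : Fin (n₁+n₂)))
      all_goals intro a ha
      all_goals first
        | exact Finset.mem_univ _
        | exact Fin.ext rfl
        | simp
    rw [e2, Finset.card_univ, Fintype.card_fin]
  have huniv : (Finset.univ : Finset (Fin (n₁+n₂))).card = n₁ + n₂ := by simp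
  have hfalse : ∀ τ : Fin (n₁ + n₂) → Bool,
      (Finset.univ.filter (fun i => τ i = true)).card = n₁ →
      (Finset.univ.filter (fun i => τ i = false)).card = n₂ := by
    intro τ hτ
    have h2 : (Finset.univ.filter (fun i => τ i = false))
        = (Finset.univ.filter (fun i => ¬ (τ i = true))) := by
      apply Finset.filter_congr; intro i _; simp
    have h3 := Finset.card_filter_add_card_filter_not
      (s := (Finset.univ : Finset (Fin (n₁+n₂)))) (p := fun i => τ i = true)
    rw [huniv, hτ] at h3
    rw [h2]
    omega
  have hσfalse := hfalse σ hσ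
  have hσ₀false := hfalse σ₀ hσ₀card
  -- the four counts
  have htt : cnt σ true true = cnt σ₀ true true := by
    have h1 := cmu_aux_pairs (fun i : Fin (n₁+n₂) => σ i = true)
    have h2 := cmu_aux_pairs (fun i : Fin (n₁+n₂) => σ₀ i = true)
    rw [hσ] at h1; rw [hσ₀card] at h2
    simp only [hcnt]
    omega
  have hff : cnt σ false false = cnt σ₀ false false := by
    have h1 := cmu_aux_pairs (fun i : Fin (n₁+n₂) => σ i = false)
    have h2 := cmu_aux_pairs (fun i : Fin (n₁+n₂) => σ₀ i = false)
    rw [hσfalse] at h1; rw [hσ₀false] at h2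
    simp only [hcnt]
    omega
  have hmix : ∀ τ : Fin (n₁ + n₂) → Bool,
      (Finset.univ.filter (fun i => τ i = true)).card = n₁ →
      cnt τ true false + cnt τ false true = n₁ * n₂ := by
    intro τ hτ
    have h1 := cmu_aux_mixed (fun i : Fin (n₁+n₂) => τ i = true)
      (fun i : Fin (n₁+n₂) => τ i = false) (by intro i h; simp_all)
    rw [hτ, hfalse τ hτ] at h1
    simpa [hcnt] using h1
  have hmixσ := hmix σ hσ
  have hmixσ₀ := hmix σ₀ hσ₀card
  have hft₀ : cnt σ₀ false true = 0 := by
    simp only [hcnt]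
    rw [Finset.card_eq_zero, Finset.filter_eq_empty_iff]
    rintro x -
    simp only [hσ₀, decide_eq_false_iff_not, decide_eq_true_eq, not_and, not_lt]
    rintro ⟨h1, h2⟩ h3
    exact absurd (lt_of_le_of_lt (show (x.1 : ℕ) ≤ (x.2 : ℕ) from h3) h2)
      (not_lt.mpr h1)
  have htf₀ : cnt σ₀ true false = n₁ * n₂ := by omega
  -- final comparison
  rw [key σ, key σ₀]
  simp only [Fintype.sum_prod_type, Fintype.sum_bool, if_true, if_false]
  rw [htt, hff, htf₀, hft₀]
  have hdiv : c₂ / μ₁ ≤ c₁ / μ₂ := by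
    rw [div_le_div_iff₀ hμ₁ hμ₂]
    exact hrule
  have hbd : (n₁ * n₂ : ℝ) * (c₂ / μ₁)
      ≤ (cnt σ true false : ℝ) * (c₂ / μ₁) + (cnt σ false true : ℝ) * (c₁ / μ₂) := by
    have hsum : (cnt σ true false : ℝ) + (cnt σ false true : ℝ) = (n₁ * n₂ : ℝ) := by
      exact_mod_cast congrArg (fun n : ℕ => (n : ℝ)) hmixσ
    calc (n₁ * n₂ : ℝ) * (c₂ / μ₁)
        = (cnt σ true false : ℝ) * (c₂ / μ₁)
          + (cnt σ false true : ℝ) * (c₂ / μ₁) := by rw [← hsum]; ring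
      _ ≤ (cnt σ true false : ℝ) * (c₂ / μ₁)
          + (cnt σ false true : ℝ) * (c₁ / μ₂) := by
          gcongr
  push_cast
  nlinarith [hbd]
end

section
/- For a finite irreducible Markov chain, the derivative of the average reward with respect to a perturbation direction of the transition matrix is given by the performance derivative formula: if P(θ) = P + θ Δ is stochastic and irreducible for θ in a neighborhood of 0 (so Δ has zero row sums), then d/dθ η(θ)|_{θ=0} = π Δ g, where π is the stationary distribution of P, g solves the Poisson equation (I - P) g + η 1 = f, and η(θ) is the average reward of P(θ) with fixed reward f. -/
/-!
Cao's performance difference formula: if `π'` is a stationary distribution of a second transition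
matrix `P'`, then `π' f - η = π' (P' - P) g`, as one sees by pairing the Poisson equation with `π'`.
For `P' = P + θΔ` this reads `η(θ) = η + θ · π(θ) Δ g` exactly, so the derivative at `0` is
`π Δ g` as soon as `π(θ) → π`. That continuity holds because the stationary distributions lie in
the compact simplex and every limit point of them is stationary for `P`, hence equal to `π` by
uniqueness of the stationary distribution of an irreducible chain.
-/

open Filter Topology Matrix

namespace Matrix

variable {S : Type*} [Fintype S]

lemma vecMul_pow_eq_self [DecidableEq S] {R : Type*} [Semiring R] {P : Matrix S S R} {μ : S → R}
    (h : μ ᵥ* P = μ) (n : ℕ) : μ ᵥ* P ^ n = μ := by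
  induction n with
  | zero => simp
  | succ n ih => rw [pow_succ, ← vecMul_vecMul, ih, h]

lemma eq_zero_of_vecMul_eq_self_of_apply_eq_zero [DecidableEq S] {P : Matrix S S ℝ} (hP : ∀ i j, 0 ≤ P i j)
    (hirr : ∀ i j, ∃ n : ℕ, 0 < (P ^ n) i j) {ν : S → ℝ} (hν : ∀ i, 0 ≤ ν i)
    (hstat : ν ᵥ* P = ν) {j : S} (hj : ν j = 0) (i : S) : ν i = 0 := by
  obtain ⟨n, hn⟩ := hirr i j
  have hsum : ∑ k, ν k * (P ^ n) k j = 0 := by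
    rw [← hj]
    exact congrFun (vecMul_pow_eq_self hstat n) j
  have hterm := (Finset.sum_eq_zero_iff_of_nonneg fun k _ =>
    mul_nonneg (hν k) (pow_apply_nonneg hP n k j)).mp hsum i (Finset.mem_univ i)
  exact (mul_eq_zero.mp hterm).resolve_right hn.ne'

lemma pos_of_vecMul_eq_self [DecidableEq S] {P : Matrix S S ℝ} (hP : ∀ i j, 0 ≤ P i j)
    (hirr : ∀ i j, ∃ n : ℕ, 0 < (P ^ n) i j) {μ : S → ℝ} (hμ : μ ∈ stdSimplex ℝ S)
    (hstat : μ ᵥ* P = μ) (j : S) : 0 < μ j := by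
  refine (hμ.1 j).lt_of_ne' fun hj => ?_
  have hsum : ∑ i, μ i = 0 := Finset.sum_eq_zero fun i _ =>
    eq_zero_of_vecMul_eq_self_of_apply_eq_zero hP hirr hμ.1 hstat hj i
  simp [hμ.2] at hsum

lemma eq_of_vecMul_eq_self [DecidableEq S] {P : Matrix S S ℝ} (hP : ∀ i j, 0 ≤ P i j)
    (hirr : ∀ i j, ∃ n : ℕ, 0 < (P ^ n) i j) {μ ρ : S → ℝ} (hμsum : ∑ i, μ i = 1)
    (hμ : μ ᵥ* P = μ) (hρ : ρ ∈ stdSimplex ℝ S) (hρstat : ρ ᵥ* P = ρ) : μ = ρ := by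
  have hρpos := pos_of_vecMul_eq_self hP hirr hρ hρstat
  obtain ⟨i, -⟩ := Finset.exists_ne_zero_of_sum_ne_zero (hρ.2 ▸ one_ne_zero : ∑ i, ρ i ≠ 0)
  -- `μ - t • ρ` with the largest `t` keeping it nonnegative is stationary and vanishes at `i₀`
  obtain ⟨i₀, -, hmin⟩ :=
    Finset.exists_min_image Finset.univ (fun i => μ i / ρ i) ⟨i, Finset.mem_univ i⟩
  set t := μ i₀ / ρ i₀
  have hν : ∀ i, 0 ≤ (μ - t • ρ) i := fun i => by
    have := (le_div_iff₀ (hρpos i)).mp (hmin i (Finset.mem_univ i))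
    simp only [Pi.sub_apply, Pi.smul_apply, smul_eq_mul]
    linarith
  have hνstat : (μ - t • ρ) ᵥ* P = μ - t • ρ := by rw [sub_vecMul, smul_vecMul, hμ, hρstat]
  have hν₀ : (μ - t • ρ) i₀ = 0 := by simp [t, div_mul_cancel₀ _ (hρpos i₀).ne']
  have hμt : μ = t • ρ := sub_eq_zero.mp <|
    funext (eq_zero_of_vecMul_eq_self_of_apply_eq_zero hP hirr hν hνstat hν₀)
  have ht : t = 1 := by simpa [hμt, ← Finset.mul_sum, hρ.2] using hμsum
  rw [hμt, ht, one_smul]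

lemma tendsto_of_vecMul_eq_self [DecidableEq S] {P : Matrix S S ℝ} (hP : ∀ i j, 0 ≤ P i j)
    (hirr : ∀ i j, ∃ n : ℕ, 0 < (P ^ n) i j) {π : S → ℝ} (hπsum : ∑ i, π i = 1)
    (hπ : π ᵥ* P = π) {Y : Type*} {l : Filter Y} {Q : Y → Matrix S S ℝ}
    (hQ : Tendsto Q l (𝓝 P)) {ρ : Y → S → ℝ}
    (hρ : ∀ᶠ y in l, ρ y ∈ stdSimplex ℝ S ∧ ρ y ᵥ* Q y = ρ y) :
    Tendsto ρ l (𝓝 π) := by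
  refine (isCompact_stdSimplex ℝ S).tendsto_nhds_of_unique_mapClusterPt
    (hρ.mono fun _ h => h.1) fun v hv hclust => ?_
  obtain ⟨u, hul, hu⟩ := mapClusterPt_iff_ultrafilter.mp hclust
  have hlim : Tendsto (fun y => ρ y ᵥ* Q y) u (𝓝 (v ᵥ* P)) :=
    ((continuous_fst.matrix_vecMul continuous_snd).tendsto (v, P)).comp
      (hu.prodMk_nhds (hQ.mono_left hul))
  have hvP : v ᵥ* P = v :=
    tendsto_nhds_unique (hlim.congr' ((hρ.filter_mono hul).mono fun _ h => h.2)) hu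
  exact (eq_of_vecMul_eq_self hP hirr hπsum hπ hv hvP).symm

lemma dotProduct_eq_add_of_poisson {P Q : Matrix S S ℝ} {f g ρ : S → ℝ} {η : ℝ}
    (hpoisson : ∀ s, g s - (P *ᵥ g) s + η = f s) (hρsum : ∑ i, ρ i = 1)
    (hρ : ρ ᵥ* Q = ρ) : ρ ⬝ᵥ f = η + ρ ⬝ᵥ ((Q - P) *ᵥ g) := by
  have hf : f = g - P *ᵥ g + η • 1 := by
    ext s
    simp [← hpoisson s]
  rw [hf, dotProduct_add, dotProduct_sub, dotProduct_smul, dotProduct_one, hρsum, sub_mulVec,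
    dotProduct_sub, dotProduct_mulVec ρ Q, hρ, smul_eq_mul, mul_one]
  ring

end Matrix

lemma hasDerivAt_of_eventually_eq_add_mul {𝕜 : Type*} [NontriviallyNormedField 𝕜]
    {F G : 𝕜 → 𝕜} {x : 𝕜} (hF : ∀ᶠ t in 𝓝 x, F t = F x + (t - x) * G t)
    (hG : ContinuousAt G x) : HasDerivAt F (G x) x := by
  rw [hasDerivAt_iff_tendsto_slope]
  refine (hG.tendsto.mono_left nhdsWithin_le_nhds).congr' ?_
  filter_upwards [nhdsWithin_le_nhds hF, self_mem_nhdsWithin] with t ht hne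
  rw [slope_def_field, ht]
  field_simp [sub_ne_zero.mpr hne]
  ring

theorem performance_derivative_formula_general
    {S : Type*} [Fintype S] [DecidableEq S]
    (P Δ : Matrix S S ℝ)
    (hPnn : ∀ i j, 0 ≤ P i j)
    (hPirr : ∀ i j, ∃ n : ℕ, 0 < (P ^ n) i j)
    (f g : S → ℝ) (π : S → ℝ) (η : ℝ)
    (hπsum : ∑ i, π i = 1)
    (hπstat : ∀ j, ∑ i, π i * P i j = π j)
    (hη : η = ∑ s, π s * f s)
    (hpoisson : ∀ s, (g s - ∑ s', P s s' * g s') + η = f s)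
    (ε : ℝ) (hε : 0 < ε)
    (πθ : ℝ → S → ℝ)
    (hθ : ∀ θ : ℝ, |θ| < ε →
      (∀ i j, 0 ≤ P i j + θ * Δ i j) ∧
      (∀ i j, ∃ n : ℕ, 0 < ((P + θ • Δ) ^ n) i j) ∧
      (∀ i, 0 ≤ πθ θ i) ∧ (∑ i, πθ θ i = 1) ∧
      (∀ j, ∑ i, πθ θ i * (P i j + θ * Δ i j) = πθ θ j))
    (hθ0 : πθ 0 = π) :
    HasDerivAt (fun θ : ℝ => ∑ s, πθ θ s * f s)
      (∑ s, ∑ s', π s * Δ s s' * g s') 0 := by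
  have hstat : ∀ᶠ θ in 𝓝 (0 : ℝ), πθ θ ∈ stdSimplex ℝ S ∧ πθ θ ᵥ* (P + θ • Δ) = πθ θ := by
    filter_upwards [Metric.ball_mem_nhds 0 hε] with θ hθε
    obtain ⟨-, -, hnn, hsum, hst⟩ := hθ θ (by simpa using hθε)
    exact ⟨⟨hnn, hsum⟩, funext hst⟩
  have hπθ : Tendsto πθ (𝓝 0) (𝓝 π) :=
    tendsto_of_vecMul_eq_self hPnn hPirr hπsum (funext hπstat)
      (Continuous.tendsto' (by fun_prop) 0 P (by simp)) hstat
  have hG : ContinuousAt (fun θ => πθ θ ⬝ᵥ (Δ *ᵥ g)) 0 := by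
    rw [ContinuousAt, hθ0]
    exact ((continuous_fst.dotProduct continuous_snd).tendsto (π, Δ *ᵥ g)).comp
      (hπθ.prodMk_nhds tendsto_const_nhds)
  have hF : ∀ᶠ θ in 𝓝 (0 : ℝ), πθ θ ⬝ᵥ f = πθ 0 ⬝ᵥ f + (θ - 0) * (πθ θ ⬝ᵥ (Δ *ᵥ g)) := by
    filter_upwards [hstat] with θ ⟨hθS, hθstat⟩
    rw [dotProduct_eq_add_of_poisson hpoisson hθS.2 hθstat, add_sub_cancel_left, smul_mulVec,
      dotProduct_smul, smul_eq_mul, hθ0, show π ⬝ᵥ f = η from hη.symm, sub_zero]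
  refine (hasDerivAt_of_eventually_eq_add_mul hF hG).congr_deriv ?_
  simp only [hθ0, dotProduct, mulVec, Finset.mul_sum, mul_assoc]

/-- Performance derivative formula (perturbation analysis, Cao): if
P(θ) = P + θΔ is stochastic and irreducible for θ near 0 (Δ with zero row
sums), with stationary distributions π(θ) and average reward η(θ) = π(θ) f,
then d/dθ η(θ)|₀ = π Δ g, where g solves (I - P) g + η·1 = f. -/
theorem performance_derivative_formula
    {S : Type*} [Fintype S] [DecidableEq S] [Nonempty S]
    (P Δ : Matrix S S ℝ)
    (hPnn : ∀ i j, 0 ≤ P i j) (hProw : ∀ i, ∑ j, P i j = 1)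
    (hPirr : ∀ i j, ∃ n : ℕ, 0 < (P ^ n) i j)
    (hΔrow : ∀ i, ∑ j, Δ i j = 0)
    (f g : S → ℝ) (π : S → ℝ) (η : ℝ)
    (hπnn : ∀ i, 0 ≤ π i) (hπsum : ∑ i, π i = 1)
    (hπstat : ∀ j, ∑ i, π i * P i j = π j)
    (hη : η = ∑ s, π s * f s)
    (hpoisson : ∀ s, (g s - ∑ s', P s s' * g s') + η = f s)
    (ε : ℝ) (hε : 0 < ε)
    (πθ : ℝ → S → ℝ)
    (hθ : ∀ θ : ℝ, |θ| < ε →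
      (∀ i j, 0 ≤ P i j + θ * Δ i j) ∧
      (∀ i j, ∃ n : ℕ, 0 < ((P + θ • Δ) ^ n) i j) ∧
      (∀ i, 0 ≤ πθ θ i) ∧ (∑ i, πθ θ i = 1) ∧
      (∀ j, ∑ i, πθ θ i * (P i j + θ * Δ i j) = πθ θ j))
    (hθ0 : πθ 0 = π) :
    HasDerivAt (fun θ : ℝ => ∑ s, πθ θ s * f s)
      (∑ s, ∑ s', π s * Δ s s' * g s') 0 :=
  performance_derivative_formula_general P Δ hPnn hPirr f g π η hπsum hπstat hη hpoisson ε hε πθ hθ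
    hθ0
end

section
/- In the event-based optimization framework for a finite irreducible Markov chain, if the set of state transitions is partitioned into events e_1, ..., e_K and the perturbation Δ of the transition matrix is constant on each event (Δ(s, s') = δ_k whenever the transition (s, s') belongs to event e_k, and zero otherwise, with zero row sums), then the performance derivative aggregates over events: d/dθ η(θ)|_{θ=0} = ∑_{k=1}^K δ_k ∑_{(s,s') ∈ e_k} π(s) g(s'), i.e., the derivative depends on the potentials g only through the event-aggregated quantities ∑_{(s,s') ∈ e_k} π(s) g(s'). -/
open Filter Topology

section aux
variable {S : Type*} [Fintype S] [DecidableEq S]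

lemma ebda_pow_nonneg (P : Matrix S S ℝ) (hPnn : ∀ i j, 0 ≤ P i j) :
    ∀ (n : ℕ) (i j : S), 0 ≤ (P ^ n) i j := by
  intro n
  induction n with
  | zero =>
    intro i j
    simp only [pow_zero, Matrix.one_apply]
    split <;> norm_num
  | succ n ih =>
    intro i j
    rw [pow_succ, Matrix.mul_apply]
    exact Finset.sum_nonneg fun k _ => mul_nonneg (ih i k) (hPnn k j)

lemma ebda_stat_pow (P : Matrix S S ℝ) (v : S → ℝ)
    (hv : ∀ j, ∑ i, v i * P i j = v j) :
    ∀ (n : ℕ) (j : S), ∑ i, v i * (P ^ n) i j = v j := by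
  intro n
  induction n with
  | zero =>
    intro j
    simp [Matrix.one_apply]
  | succ n ih =>
    intro j
    rw [pow_succ]
    calc ∑ i, v i * (P ^ n * P) i j
        = ∑ i, ∑ k, v i * ((P ^ n) i k * P k j) := by
          simp [Matrix.mul_apply, Finset.mul_sum]
      _ = ∑ k, (∑ i, v i * (P ^ n) i k) * P k j := by
          rw [Finset.sum_comm]
          simp [Finset.sum_mul, mul_assoc]
      _ = ∑ k, v k * P k j := by simp only [ih]
      _ = v j := hv j

lemma ebda_pos (P : Matrix S S ℝ) (hPnn : ∀ i j, 0 ≤ P i j)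
    (hPirr : ∀ i j, ∃ n : ℕ, 0 < (P ^ n) i j)
    (ρ : S → ℝ) (hnn : ∀ i, 0 ≤ ρ i) (hsum : ∑ i, ρ i = 1)
    (hstat : ∀ j, ∑ i, ρ i * P i j = ρ j) : ∀ j, 0 < ρ j := by
  have hex : ∃ i, 0 < ρ i := by
    by_contra h
    push_neg at h
    rw [Finset.sum_eq_zero (fun i _ => le_antisymm (h i) (hnn i))] at hsum
    norm_num at hsum
  obtain ⟨i, hi⟩ := hex
  intro j
  obtain ⟨n, hn⟩ := hPirr i j
  have h1 : ρ i * (P ^ n) i j ≤ ∑ s, ρ s * (P ^ n) s j :=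
    Finset.single_le_sum
      (fun s _ => mul_nonneg (hnn s) (ebda_pow_nonneg P hPnn n s j))
      (Finset.mem_univ i)
  have h2 := ebda_stat_pow P ρ hstat n j
  calc (0:ℝ) < ρ i * (P ^ n) i j := mul_pos hi hn
    _ ≤ ρ j := h2 ▸ h1

lemma ebda_unique [Nonempty S] (P : Matrix S S ℝ) (hPnn : ∀ i j, 0 ≤ P i j)
    (hPirr : ∀ i j, ∃ n : ℕ, 0 < (P ^ n) i j)
    (π ρ : S → ℝ)
    (hπnn : ∀ i, 0 ≤ π i) (hπsum : ∑ i, π i = 1)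
    (hπstat : ∀ j, ∑ i, π i * P i j = π j)
    (hρnn : ∀ i, 0 ≤ ρ i) (hρsum : ∑ i, ρ i = 1)
    (hρstat : ∀ j, ∑ i, ρ i * P i j = ρ j) : ρ = π := by
  have hπpos := ebda_pos P hPnn hPirr π hπnn hπsum hπstat
  obtain ⟨i₀, -, hmin⟩ := Finset.exists_min_image Finset.univ
    (fun s => ρ s / π s) ⟨Classical.arbitrary S, Finset.mem_univ _⟩
  set c := ρ i₀ / π i₀ with hc
  set v : S → ℝ := fun s => ρ s - c * π s with hv
  have hvnn : ∀ s, 0 ≤ v s := by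
    intro s
    have h1 : c ≤ ρ s / π s := hmin s (Finset.mem_univ s)
    have h2 : c * π s ≤ ρ s := (le_div_iff₀ (hπpos s)).mp h1
    simpa [hv] using sub_nonneg.mpr h2
  have hvstat : ∀ j, ∑ s, v s * P s j = v j := by
    intro j
    simp only [hv, sub_mul, Finset.sum_sub_distrib, mul_assoc]
    rw [hρstat j, ← Finset.mul_sum, hπstat j]
  have hvi₀ : v i₀ = 0 := by
    simp only [hv, hc]
    rw [div_mul_cancel₀ _ (ne_of_gt (hπpos i₀))]
    ring
  have hvzero : ∀ j, v j = 0 := by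
    intro j
    obtain ⟨n, hn⟩ := hPirr j i₀
    have hsum0 : ∑ s, v s * (P ^ n) s i₀ = 0 := by
      rw [ebda_stat_pow P v hvstat n i₀, hvi₀]
    have h0 := (Finset.sum_eq_zero_iff_of_nonneg
      (fun s _ => mul_nonneg (hvnn s) (ebda_pow_nonneg P hPnn n s i₀))).mp
      hsum0 j (Finset.mem_univ j)
    rcases mul_eq_zero.mp h0 with h | h
    · exact h
    · exact absurd h (ne_of_gt hn)
  have hc1 : c = 1 := by
    have hs : ∑ s, v s = 0 := Finset.sum_eq_zero (fun s _ => hvzero s)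
    simp only [hv, Finset.sum_sub_distrib, ← Finset.mul_sum, hρsum, hπsum, mul_one] at hs
    linarith
  funext s
  have := hvzero s
  simp only [hv, hc1, one_mul] at this
  linarith

end aux

/-- Event-based optimization: if the perturbation Δ of the transition matrix
is constant on each event of a partition {e₁,...,e_K} of a set of transitions
(Δ(s,s') = δ_k for (s,s') ∈ e_k, zero otherwise, zero row sums), then the
performance derivative aggregates over events:
d/dθ η(θ)|₀ = ∑_k δ_k ∑_{(s,s') ∈ e_k} π(s) g(s'). -/
theorem event_based_derivative_aggregation
    {S : Type*} [Fintype S] [DecidableEq S] [Nonempty S]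
    (P Δ : Matrix S S ℝ)
    (hPnn : ∀ i j, 0 ≤ P i j) (hProw : ∀ i, ∑ j, P i j = 1)
    (hPirr : ∀ i j, ∃ n : ℕ, 0 < (P ^ n) i j)
    (K : ℕ) (e : Fin K → Finset (S × S)) (δ : Fin K → ℝ)
    (hdisj : ∀ k k', k ≠ k' → Disjoint (e k) (e k'))
    (hΔ : ∀ s s' : S,
      Δ s s' = ∑ k, if (s, s') ∈ e k then δ k else 0)
    (hΔrow : ∀ i, ∑ j, Δ i j = 0)
    (f g : S → ℝ) (π : S → ℝ) (η : ℝ)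
    (hπnn : ∀ i, 0 ≤ π i) (hπsum : ∑ i, π i = 1)
    (hπstat : ∀ j, ∑ i, π i * P i j = π j)
    (hη : η = ∑ s, π s * f s)
    (hpoisson : ∀ s, (g s - ∑ s', P s s' * g s') + η = f s)
    (ε : ℝ) (hε : 0 < ε)
    (πθ : ℝ → S → ℝ)
    (hθ : ∀ θ : ℝ, |θ| < ε →
      (∀ i j, 0 ≤ P i j + θ * Δ i j) ∧
      (∀ i j, ∃ n : ℕ, 0 < ((P + θ • Δ) ^ n) i j) ∧
      (∀ i, 0 ≤ πθ θ i) ∧ (∑ i, πθ θ i = 1) ∧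
      (∀ j, ∑ i, πθ θ i * (P i j + θ * Δ i j) = πθ θ j))
    (hθ0 : πθ 0 = π) :
    HasDerivAt (fun θ : ℝ => ∑ s, πθ θ s * f s)
      (∑ k, δ k * ∑ p ∈ e k, π p.1 * g p.2) 0 := by
  classical
  set v : S → ℝ := fun s => ∑ s', Δ s s' * g s' with hvdef
  -- Step 1: derivative value equals ∑ s, π s * v s
  have hD : (∑ k, δ k * ∑ p ∈ e k, π p.1 * g p.2) = ∑ s, π s * v s := by
    calc ∑ k, δ k * ∑ p ∈ e k, π p.1 * g p.2
        = ∑ k, ∑ p ∈ e k, δ k * (π p.1 * g p.2) := by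
          exact Finset.sum_congr rfl fun k _ => by rw [Finset.mul_sum]
      _ = ∑ k, ∑ p : S × S, if p ∈ e k then δ k * (π p.1 * g p.2) else 0 := by
          refine Finset.sum_congr rfl fun k _ => ?_
          rw [Finset.sum_ite_mem, Finset.univ_inter]
      _ = ∑ p : S × S, ∑ k, if p ∈ e k then δ k * (π p.1 * g p.2) else 0 :=
          Finset.sum_comm
      _ = ∑ p : S × S, π p.1 * (Δ p.1 p.2 * g p.2) := by
          refine Finset.sum_congr rfl fun p _ => ?_
          rw [hΔ p.1 p.2, Finset.sum_mul, Finset.mul_sum]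
          refine Finset.sum_congr rfl fun k _ => ?_
          by_cases h : p ∈ e k
          · simp only [Prod.mk.eta, h, if_true]
            ring
          · simp [h]
      _ = ∑ s, π s * v s := by
          rw [Fintype.sum_prod_type]
          refine Finset.sum_congr rfl fun s _ => ?_
          rw [hvdef]
          simp only
          rw [Finset.mul_sum]
  -- Step 2: key algebraic identity for |θ| < ε
  have hkey : ∀ θ : ℝ, |θ| < ε →
      ∑ s, πθ θ s * f s = η + θ * ∑ s, πθ θ s * v s := by
    intro θ hlt
    obtain ⟨-, -, -, hsum1, hstat⟩ := hθ θ hlt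
    have hstat' : ∀ j, ∑ i, πθ θ i * P i j
        = πθ θ j - θ * ∑ i, πθ θ i * Δ i j := by
      intro j
      have h := hstat j
      simp only [mul_add, Finset.sum_add_distrib] at h
      have h2 : ∑ i, πθ θ i * (θ * Δ i j) = θ * ∑ i, πθ θ i * Δ i j := by
        rw [Finset.mul_sum]
        exact Finset.sum_congr rfl fun i _ => by ring
      rw [h2] at h
      linarith
    have hA : ∑ s, πθ θ s * ∑ s', P s s' * g s'
        = (∑ s, πθ θ s * g s) - θ * ∑ s, πθ θ s * v s := by
      calc ∑ s, πθ θ s * ∑ s', P s s' * g s'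
          = ∑ s, ∑ s', πθ θ s * P s s' * g s' := by
            refine Finset.sum_congr rfl fun s _ => ?_
            rw [Finset.mul_sum]
            exact Finset.sum_congr rfl fun s' _ => by ring
        _ = ∑ s', (∑ s, πθ θ s * P s s') * g s' := by
            rw [Finset.sum_comm]
            exact Finset.sum_congr rfl fun s' _ => by rw [Finset.sum_mul]
        _ = ∑ s', (πθ θ s' - θ * ∑ i, πθ θ i * Δ i s') * g s' :=
            Finset.sum_congr rfl fun s' _ => by rw [hstat']
        _ = (∑ s', πθ θ s' * g s')
              - θ * ∑ s', (∑ i, πθ θ i * Δ i s') * g s' := by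
            simp only [sub_mul, Finset.sum_sub_distrib]
            congr 1
            rw [Finset.mul_sum]
            exact Finset.sum_congr rfl fun s' _ => by ring
        _ = (∑ s, πθ θ s * g s) - θ * ∑ s, πθ θ s * v s := by
            congr 2
            calc ∑ s', (∑ i, πθ θ i * Δ i s') * g s'
                = ∑ s', ∑ i, πθ θ i * (Δ i s' * g s') := by
                  refine Finset.sum_congr rfl fun s' _ => ?_
                  rw [Finset.sum_mul]
                  exact Finset.sum_congr rfl fun i _ => by ring
              _ = ∑ i, πθ θ i * ∑ s', Δ i s' * g s' := by
                  rw [Finset.sum_comm]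
                  exact Finset.sum_congr rfl fun i _ => by rw [Finset.mul_sum]
              _ = ∑ s, πθ θ s * v s := by rw [hvdef]
    calc ∑ s, πθ θ s * f s
        = ∑ s, πθ θ s * ((g s - ∑ s', P s s' * g s') + η) :=
          Finset.sum_congr rfl fun s _ => by rw [hpoisson s]
      _ = (∑ s, πθ θ s * g s) - (∑ s, πθ θ s * ∑ s', P s s' * g s') + η := by
          simp only [mul_add, mul_sub, Finset.sum_add_distrib, Finset.sum_sub_distrib,
            ← Finset.sum_mul, hsum1, one_mul]
      _ = η + θ * ∑ s, πθ θ s * v s := by rw [hA]; ring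
  -- Step 3: continuity of the stationary distribution at 0
  have hevε : ∀ᶠ θ : ℝ in 𝓝 0, |θ| < ε := by
    have hmem : Set.Ioo (-ε) ε ∈ 𝓝 (0:ℝ) := Ioo_mem_nhds (by linarith) hε
    filter_upwards [hmem] with θ hθ'
    exact abs_lt.mpr ⟨hθ'.1, hθ'.2⟩
  set Q : ℝ → S → ℝ := fun θ => if |θ| < ε then πθ θ else π with hQdef
  have hQmem : ∀ θ, Q θ ∈ Set.Icc (0 : S → ℝ) 1 := by
    intro θ
    have hgen : ∀ x : S → ℝ, (∀ i, 0 ≤ x i) → (∑ i, x i) = 1 →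
        x ∈ Set.Icc (0 : S → ℝ) 1 := by
      intro x hnn hsum
      constructor
      · intro i; exact hnn i
      · intro i
        have : x i ≤ ∑ j, x j :=
          Finset.single_le_sum (fun j _ => hnn j) (Finset.mem_univ i)
        rw [hsum] at this
        simpa using this
    rw [hQdef]
    simp only
    split
    next h => exact hgen _ (hθ θ h).2.2.1 (hθ θ h).2.2.2.1
    next => exact hgen _ hπnn hπsum
  have hQsum : ∀ θ, ∑ i, Q θ i = 1 := by
    intro θ
    rw [hQdef]
    simp only
    split
    next h => exact (hθ θ h).2.2.2.1
    next => exact hπsum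
  set c : ℝ → ℝ := fun θ => if |θ| < ε then θ else 0 with hcdef
  have hQstat : ∀ θ j, ∑ i, Q θ i * (P i j + c θ * Δ i j) = Q θ j := by
    intro θ j
    rw [hQdef, hcdef]
    simp only
    split
    next h => exact (hθ θ h).2.2.2.2 j
    next => simp only [zero_mul, add_zero]; exact hπstat j
  have hc0 : Tendsto c (𝓝 0) (𝓝 0) := by
    refine Tendsto.congr' ?_ (@tendsto_id ℝ (𝓝 0))
    filter_upwards [hevε] with θ h
    rw [hcdef]
    simp only [id_eq]
    rw [if_pos h]
  have hQtendsto : Tendsto Q (𝓝 (0:ℝ)) (𝓝 π) := by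
    apply tendsto_of_subseq_tendsto
    intro ns hns
    obtain ⟨ρ, hρmem, φ, hφmono, hφ⟩ :=
      (isCompact_Icc (a := (0 : S → ℝ)) (b := 1)).tendsto_subseq
        (x := fun n => Q (ns n)) (fun n => hQmem (ns n))
    refine ⟨φ, ?_⟩
    have hcoord : ∀ i, Tendsto (fun n => Q (ns (φ n)) i) atTop (𝓝 (ρ i)) :=
      fun i => ((continuous_apply i).continuousAt.tendsto).comp hφ
    have hθn : Tendsto (fun n => c (ns (φ n))) atTop (𝓝 0) :=
      hc0.comp (hns.comp hφmono.tendsto_atTop)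
    have hρnn : ∀ i, 0 ≤ ρ i := fun i => hρmem.1 i
    have hρsum : ∑ i, ρ i = 1 := by
      have h1 : Tendsto (fun n => ∑ i, Q (ns (φ n)) i) atTop (𝓝 (∑ i, ρ i)) :=
        tendsto_finset_sum _ (fun i _ => hcoord i)
      have h2 : (fun n => ∑ i, Q (ns (φ n)) i) = fun _ => (1:ℝ) :=
        funext fun n => hQsum _
      rw [h2] at h1
      exact tendsto_nhds_unique h1 tendsto_const_nhds
    have hρstat : ∀ j, ∑ i, ρ i * P i j = ρ j := by
      intro j
      have h1 : Tendsto (fun n => ∑ i, Q (ns (φ n)) i * (P i j + c (ns (φ n)) * Δ i j))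
          atTop (𝓝 (∑ i, ρ i * (P i j + 0 * Δ i j))) := by
        refine tendsto_finset_sum _ fun i _ => ?_
        exact (hcoord i).mul (tendsto_const_nhds.add (hθn.mul tendsto_const_nhds))
      simp only [zero_mul, add_zero] at h1
      have h2 : (fun n => ∑ i, Q (ns (φ n)) i * (P i j + c (ns (φ n)) * Δ i j))
          = fun n => Q (ns (φ n)) j := funext fun n => hQstat _ j
      rw [h2] at h1
      exact tendsto_nhds_unique h1 (hcoord j)
    have hρπ : ρ = π :=
      ebda_unique P hPnn hPirr π ρ hπnn hπsum hπstat hρnn hρsum hρstat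
    rw [← hρπ]
    exact hφ
  have hπθtendsto : Tendsto (fun θ => πθ θ) (𝓝[≠] (0:ℝ)) (𝓝 π) := by
    refine Tendsto.congr' ?_ (hQtendsto.mono_left nhdsWithin_le_nhds)
    apply eventually_nhdsWithin_of_eventually_nhds
    filter_upwards [hevε] with θ h
    rw [hQdef]
    simp only
    rw [if_pos h]
  -- Step 4: assemble the derivative
  have hT : Tendsto (fun θ => ∑ s, πθ θ s * v s) (𝓝[≠] (0:ℝ))
      (𝓝 (∑ s, π s * v s)) := by
    refine tendsto_finset_sum _ fun s _ => ?_
    exact (((continuous_apply s).continuousAt.tendsto).comp hπθtendsto).mul_const (v s)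
  rw [hasDerivAt_iff_tendsto_slope, hD]
  have heq : ∀ᶠ θ in 𝓝[≠] (0:ℝ),
      (fun θ => ∑ s, πθ θ s * v s) θ = slope (fun θ : ℝ => ∑ s, πθ θ s * f s) 0 θ := by
    filter_upwards [self_mem_nhdsWithin,
      eventually_nhdsWithin_of_eventually_nhds hevε] with θ hne hlt
    have hF0 : ∑ s, πθ (0:ℝ) s * f s = η := by rw [hθ0, ← hη]
    have hFθ := hkey θ hlt
    have hθne : θ ≠ 0 := hne
    rw [slope_def_field, hFθ, hF0, sub_zero, add_sub_cancel_left, mul_comm,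
      mul_div_assoc, div_self hθne, mul_one]
  exact Tendsto.congr' heq hT
end
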